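/- arXiv:2407.00030 — 2 statements merged into one kernel-verified Lean document; each statement's English description precedes it below -/
import Mathlib

section
/- Let K ≥ 1, f, and c : ℕ → ℕ be given, and let bad : ℕ → Prop be a decidable predicate such that for every i, bad(i) implies ¬bad(i+K), and such that c(i) ≥ f+1 whenever ¬bad(i). Then for every m, the sum of c(i) over i in the interval [m, m+2K) is at least (f+1)·K. -/
/-- Chain quality (abstract form): if `bad i → ¬ bad (i + K)` and every
non-bad epoch contributes at least `f + 1` correct blocks, then every window
of `2K` consecutive epochs contributes at least `(f + 1) * K` correct
blocks. -/
theorem chain_quality (K : ℕ) (hK : 1 ≤ K) (f : ℕ) (c : ℕ → ℕ)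
    (bad : ℕ → Prop) [DecidablePred bad]
    (hbad : ∀ i, bad i → ¬ bad (i + K))
    (hc : ∀ i, ¬ bad i → f + 1 ≤ c i) (m : ℕ) :
    (f + 1) * K ≤ ∑ i ∈ Finset.Ico m (m + 2 * K), c i := by
  have hsplit : ∑ i ∈ Finset.Ico m (m + 2 * K), c i
      = ∑ i ∈ Finset.Ico m (m + K), (c i + c (i + K)) := by
    rw [Finset.sum_add_distrib]
    have h1 : Finset.Ico m (m + 2 * K) = Finset.Ico m (m + K) ∪ Finset.Ico (m + K) (m + 2 * K) := by
      rw [Finset.Ico_union_Ico_eq_Ico] <;> omega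
    rw [h1, Finset.sum_union (Finset.Ico_disjoint_Ico_consecutive m (m + K) (m + 2 * K))]
    have h2 : m + 2 * K = (m + K) + K := by omega
    rw [h2, ← Finset.sum_Ico_add' c m (m + K) K]
  rw [hsplit]
  calc (f + 1) * K = ∑ _i ∈ Finset.Ico m (m + K), (f + 1) := by
        simp [Nat.card_Ico, Nat.mul_comm]
    _ ≤ _ := by
        apply Finset.sum_le_sum
        intro i _
        by_cases h : bad i
        · have := hc (i + K) (hbad i h); omega
        · have := hc i h; omega
end

section
/- Let K ≥ 1, L ≥ 1, f, and c : ℕ → ℕ be given, and let bad : ℕ → Prop be a decidable predicate such that for every i, bad(i) implies ¬bad(i+K) and c(i) ≥ f+1 whenever ¬bad(i). Then for every m, the ratio (as rational numbers) of the sum of c(i) over i in [m, m+2K) to the total number of slots 2·K·L is at least (f+1)/(2·L). -/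
/-- Chain quality (proportion form): the fraction of correct blocks in any
window of `2K` consecutive epochs (`2KL` slots) is at least `(f+1)/(2L)`. -/
theorem chain_quality_ratio (K L : ℕ) (hK : 1 ≤ K) (hL : 1 ≤ L) (f : ℕ)
    (c : ℕ → ℕ) (bad : ℕ → Prop) [DecidablePred bad]
    (hbad : ∀ i, bad i → ¬ bad (i + K))
    (hc : ∀ i, ¬ bad i → f + 1 ≤ c i) (m : ℕ) :
    ((f : ℚ) + 1) / (2 * L) ≤
      (∑ i ∈ Finset.Ico m (m + 2 * K), (c i : ℚ)) / (2 * K * L) := by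
  have key : (K : ℚ) * (f + 1) ≤ ∑ i ∈ Finset.Ico m (m + 2 * K), (c i : ℚ) := by
    have hsplit : Finset.Ico m (m + 2 * K) =
        Finset.Ico m (m + K) ∪ Finset.Ico (m + K) (m + 2 * K) := by
      rw [Finset.Ico_union_Ico_eq_Ico] <;> omega
    have hdisj : Disjoint (Finset.Ico m (m + K)) (Finset.Ico (m + K) (m + 2 * K)) := by
      apply Finset.Ico_disjoint_Ico_consecutive
    rw [hsplit, Finset.sum_union hdisj]
    have hmap : ∑ i ∈ Finset.Ico (m + K) (m + 2 * K), (c i : ℚ)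
        = ∑ j ∈ Finset.Ico m (m + K), (c (j + K) : ℚ) := by
      have h2 : m + 2 * K = m + K + K := by omega
      rw [h2, ← Finset.sum_Ico_add (fun i => (c i : ℚ)) m (m + K) K]
      exact Finset.sum_congr rfl (fun x _ => by rw [Nat.add_comm])
    rw [hmap, ← Finset.sum_add_distrib]
    have hbound : ∀ j ∈ Finset.Ico m (m + K), (f : ℚ) + 1 ≤ (c j : ℚ) + (c (j + K) : ℚ) := by
      intro j _
      by_cases hb : bad j
      · have h1 := hc (j + K) (hbad j hb)
        have : (f : ℚ) + 1 ≤ (c (j + K) : ℚ) := by exact_mod_cast h1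
        have : (0 : ℚ) ≤ (c j : ℚ) := by positivity
        push_cast
        linarith [hc (j + K) (hbad j hb)]
      · have h1 := hc j hb
        have : (0 : ℚ) ≤ (c (j + K) : ℚ) := by positivity
        push_cast
        have : (f : ℚ) + 1 ≤ (c j : ℚ) := by exact_mod_cast h1
        linarith
    calc (K : ℚ) * (f + 1) = ∑ _j ∈ Finset.Ico m (m + K), ((f : ℚ) + 1) := by
          rw [Finset.sum_const, Nat.card_Ico]
          simp [nsmul_eq_mul]
          ring
      _ ≤ _ := Finset.sum_le_sum hbound
  have hKpos : (0 : ℚ) < K := by exact_mod_cast hK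
  have hLpos : (0 : ℚ) < L := by exact_mod_cast hL
  rw [div_le_div_iff₀ (by positivity) (by positivity)]
  calc ((f : ℚ) + 1) * (2 * K * L) = ((K : ℚ) * (f + 1)) * (2 * L) := by ring
    _ ≤ (∑ i ∈ Finset.Ico m (m + 2 * K), (c i : ℚ)) * (2 * L) := by
        apply mul_le_mul_of_nonneg_right key (by positivity)
end
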